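/- arXiv:math/0008147 — 5 statements merged into one kernel-verified Lean document; each statement's English description precedes it below -/
import Mathlib

section
/- The exact energy loss under the jump rule is given by the complementary projector: with Q = ωᵀ C⁻¹ ω g⁻¹ (so P + Q = I), for every p₋ ∈ ℝⁿ one has (P p₋)ᵀ g⁻¹ (P p₋) = p₋ᵀ g⁻¹ p₋ − (Q p₋)ᵀ g⁻¹ (Q p₋), and (Q p₋)ᵀ g⁻¹ (Q p₋) ≥ 0. -/
/-!
With `A = g⁻¹`, the matrix `Q = ωᵀ C⁻¹ ω A` is the `A`-orthogonal projection onto the span of the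
constraint forms: `Qᵀ A Q = A Q`, because `C⁻¹ C C⁻¹ = C⁻¹`. For such a `Q` the cross terms in
`(1 - Q)ᵀ A (1 - Q)` cancel against `Qᵀ A Q`, which is Pythagoras for the splitting `p = P p + Q p`
in the metric `A`; the loss term is a value of the positive semidefinite form `A`.
-/

open Matrix

namespace Matrix

variable {R : Type*} [CommRing R] {m n : Type*} [Fintype m] [Fintype n]

theorem nonsing_inv_mul_mul_nonsing_inv [DecidableEq n] (A : Matrix n n R) :
    A⁻¹ * A * A⁻¹ = A⁻¹ := by
  by_cases h : IsUnit A.det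
  · rw [A.nonsing_inv_mul h, Matrix.one_mul]
  · simp [A.nonsing_inv_apply_not_isUnit h]

theorem dotProduct_mulVec_mulVec_eq_transpose_mul_mul (A B : Matrix n n R) (v : n → R) :
    (B *ᵥ v) ⬝ᵥ (A *ᵥ (B *ᵥ v)) = v ⬝ᵥ ((Bᵀ * A * B) *ᵥ v) := by
  rw [← mulVec_mulVec, ← mulVec_mulVec, dotProduct_mulVec v, vecMul_transpose]

theorem transpose_one_sub_mul_mul_one_sub [DecidableEq n] {A Q : Matrix n n R} (hA : Aᵀ = A)
    (hQ : Qᵀ * A * Q = A * Q) : (1 - Q)ᵀ * A * (1 - Q) = A - Qᵀ * A * Q := by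
  have hsymm : Qᵀ * A = A * Q :=
    calc Qᵀ * A = (A * Q)ᵀ := by rw [transpose_mul, hA]
      _ = (Qᵀ * A * Q)ᵀ := by rw [hQ]
      _ = A * Q := by
        rw [transpose_mul, transpose_mul, transpose_transpose, hA, ← Matrix.mul_assoc, hQ]
  simp only [transpose_sub, transpose_one, Matrix.sub_mul, Matrix.mul_sub, Matrix.one_mul,
    Matrix.mul_one]
  rw [hQ, hsymm]
  abel

noncomputable def constraintProjector [DecidableEq m] (A : Matrix n n R) (ω : Matrix m n R) :
    Matrix n n R :=
  ωᵀ * (ω * A * ωᵀ)⁻¹ * ω * A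

theorem transpose_constraintProjector_mul_mul [DecidableEq m] {A : Matrix n n R} (hA : Aᵀ = A)
    (ω : Matrix m n R) :
    (constraintProjector A ω)ᵀ * A * constraintProjector A ω = A * constraintProjector A ω := by
  have hC : (ω * A * ωᵀ)ᵀ = ω * A * ωᵀ := by
    rw [transpose_mul, transpose_mul, transpose_transpose, hA, Matrix.mul_assoc]
  unfold constraintProjector
  rw [transpose_mul, transpose_mul, transpose_mul, transpose_nonsing_inv, hC, hA,
    transpose_transpose]
  calc _ = A * ωᵀ * ((ω * A * ωᵀ)⁻¹ * (ω * A * ωᵀ) * (ω * A * ωᵀ)⁻¹) * ω * A := by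
        simp only [Matrix.mul_assoc]
    _ = A * (ωᵀ * (ω * A * ωᵀ)⁻¹ * ω * A) := by
        rw [nonsing_inv_mul_mul_nonsing_inv]; simp only [Matrix.mul_assoc]

end Matrix

theorem energy_loss_via_complementary_projector_general
    {n s : ℕ}
    (g : Matrix (Fin n) (Fin n) ℝ) (hg : g.PosDef)
    (ω : Matrix (Fin s) (Fin n) ℝ)
    (C : Matrix (Fin s) (Fin s) ℝ) (hC : C = ω * g⁻¹ * ωᵀ)
    (P : Matrix (Fin n) (Fin n) ℝ) (hP : P = 1 - ωᵀ * C⁻¹ * ω * g⁻¹)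
    (Q : Matrix (Fin n) (Fin n) ℝ) (hQ : Q = ωᵀ * C⁻¹ * ω * g⁻¹) :
    ∀ pm : Fin n → ℝ,
      (P *ᵥ pm) ⬝ᵥ (g⁻¹ *ᵥ (P *ᵥ pm))
        = pm ⬝ᵥ (g⁻¹ *ᵥ pm) - (Q *ᵥ pm) ⬝ᵥ (g⁻¹ *ᵥ (Q *ᵥ pm)) ∧
      0 ≤ (Q *ᵥ pm) ⬝ᵥ (g⁻¹ *ᵥ (Q *ᵥ pm)) := by
  intro pm
  have hA : g⁻¹ᵀ = g⁻¹ := isHermitian_iff_isSymm.mp hg.inv.isHermitian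
  have hQ_proj : Qᵀ * g⁻¹ * Q = g⁻¹ * Q := by
    subst hC hQ
    exact transpose_constraintProjector_mul_mul hA ω
  obtain rfl : P = 1 - Q := by rw [hP, hQ]
  refine ⟨?_, by simpa using hg.inv.posSemidef.dotProduct_mulVec_nonneg (Q *ᵥ pm)⟩
  rw [dotProduct_mulVec_mulVec_eq_transpose_mul_mul, transpose_one_sub_mul_mul_one_sub hA hQ_proj,
    sub_mulVec, dotProduct_sub, ← dotProduct_mulVec_mulVec_eq_transpose_mul_mul]

/-- The exact energy loss under the jump rule is given by the complementary projector
`Q = ωᵀ C⁻¹ ω g⁻¹` (so that `P + Q = I`): for every pre-impact momentum `pm`,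
`(P pm)ᵀ g⁻¹ (P pm) = pmᵀ g⁻¹ pm − (Q pm)ᵀ g⁻¹ (Q pm)`, and the loss term is
nonnegative. -/
theorem energy_loss_via_complementary_projector
    {n s : ℕ} (hn : 0 < n) (hs : 0 < s)
    (g : Matrix (Fin n) (Fin n) ℝ) (hg : g.PosDef)
    (ω : Matrix (Fin s) (Fin n) ℝ) (hω : LinearIndependent ℝ (fun i => ω i))
    (C : Matrix (Fin s) (Fin s) ℝ) (hC : C = ω * g⁻¹ * ωᵀ)
    (P : Matrix (Fin n) (Fin n) ℝ) (hP : P = 1 - ωᵀ * C⁻¹ * ω * g⁻¹)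
    (Q : Matrix (Fin n) (Fin n) ℝ) (hQ : Q = ωᵀ * C⁻¹ * ω * g⁻¹) :
    ∀ pm : Fin n → ℝ,
      (P *ᵥ pm) ⬝ᵥ (g⁻¹ *ᵥ (P *ᵥ pm))
        = pm ⬝ᵥ (g⁻¹ *ᵥ pm) - (Q *ᵥ pm) ⬝ᵥ (g⁻¹ *ᵥ (Q *ᵥ pm)) ∧
      0 ≤ (Q *ᵥ pm) ⬝ᵥ (g⁻¹ *ᵥ (Q *ᵥ pm)) :=
  energy_loss_via_complementary_projector_general g hg ω C hC P hP Q hQ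
end

section
/- The jump rule is the perfectly inelastic collision rule: for every p₋ ∈ ℝⁿ, the post-impact momentum p₊ = P p₋ is the unique minimizer of the kinetic energy of the momentum difference, (p − p₋)ᵀ g⁻¹ (p − p₋), over all covectors p ∈ ℝⁿ satisfying the constraints ω g⁻¹ p = 0. -/
open Matrix

/-! Writing `A = g⁻¹`, the jump `P p₋ - p₋ = ωᵀ (-C⁻¹ ω A p₋)` lies in the range of `ωᵀ`, while
any admissible `p` differs from `P p₋` by a vector `d` with `ω A d = 0`. These two subspaces are
`A`-orthogonal, so the energy splits as `Q(p - p₋) = Q(d) + Q(P p₋ - p₋)` with `Q(v) = vᵀ A v`,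
and positive definiteness of `A` makes `d = 0` the unique minimizer. -/

namespace Matrix

variable {m n R : Type*} [Fintype m] [Fintype n]

theorem mul_one_sub_mul_inv_mul_eq_zero [CommRing R] [DecidableEq m] [DecidableEq n]
    (M : Matrix m n R) (N : Matrix n m R) (h : IsUnit (M * N).det) :
    M * (1 - N * (M * N)⁻¹ * M) = 0 := by
  rw [Matrix.mul_sub, Matrix.mul_one, ← Matrix.mul_assoc, ← Matrix.mul_assoc,
    mul_nonsing_inv _ h, Matrix.one_mul, sub_self]

theorem dotProduct_mulVec_add_transpose_mulVec [CommRing R] {A : Matrix n n R} (hA : A.IsSymm)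
    {ω : Matrix m n R} {d : n → R} (hd : (ω * A) *ᵥ d = 0) (y : m → R) :
    (d + ωᵀ *ᵥ y) ⬝ᵥ (A *ᵥ (d + ωᵀ *ᵥ y)) =
      d ⬝ᵥ (A *ᵥ d) + (ωᵀ *ᵥ y) ⬝ᵥ (A *ᵥ (ωᵀ *ᵥ y)) := by
  have hright : (ωᵀ *ᵥ y) ⬝ᵥ (A *ᵥ d) = 0 := by
    rw [mulVec_transpose, ← dotProduct_mulVec, mulVec_mulVec, hd, dotProduct_zero]
  have hleft : d ⬝ᵥ (A *ᵥ (ωᵀ *ᵥ y)) = 0 := by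
    rw [dotProduct_mulVec, ← mulVec_transpose, hA.eq, dotProduct_comm, hright]
  rw [mulVec_add, add_dotProduct, dotProduct_add, dotProduct_add, hleft, hright]
  ring

theorem PosDef.eq_zero_of_dotProduct_mulVec_self_eq_zero {A : Matrix n n ℝ} (hA : A.PosDef)
    {x : n → ℝ} (h : x ⬝ᵥ (A *ᵥ x) = 0) : x = 0 := by
  by_contra hx
  simpa [h] using hA.dotProduct_mulVec_pos hx

end Matrix

theorem jump_rule_is_inelastic_collision_general
    {n s : ℕ}
    (g : Matrix (Fin n) (Fin n) ℝ) (hg : g.PosDef)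
    (ω : Matrix (Fin s) (Fin n) ℝ) (hω : LinearIndependent ℝ (fun i => ω i))
    (C : Matrix (Fin s) (Fin s) ℝ) (hC : C = ω * g⁻¹ * ωᵀ)
    (P : Matrix (Fin n) (Fin n) ℝ) (hP : P = 1 - ωᵀ * C⁻¹ * ω * g⁻¹) :
    ∀ pm : Fin n → ℝ,
      (ω * g⁻¹) *ᵥ (P *ᵥ pm) = 0 ∧
      ∀ p : Fin n → ℝ, (ω * g⁻¹) *ᵥ p = 0 →
        ((P *ᵥ pm - pm) ⬝ᵥ (g⁻¹ *ᵥ (P *ᵥ pm - pm)) ≤ (p - pm) ⬝ᵥ (g⁻¹ *ᵥ (p - pm)) ∧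
          ((p - pm) ⬝ᵥ (g⁻¹ *ᵥ (p - pm)) = (P *ᵥ pm - pm) ⬝ᵥ (g⁻¹ *ᵥ (P *ᵥ pm - pm)) →
            p = P *ᵥ pm)) := by
  have hginv : g⁻¹.PosDef := hg.inv
  have hCpd : C.PosDef := by
    simpa [hC] using hginv.mul_mul_conjTranspose_same (vecMul_injective_iff.mpr hω)
  have hCdet : IsUnit (ω * g⁻¹ * ωᵀ).det := hC ▸ hCpd.det_pos.ne'.isUnit
  have hconstr : (ω * g⁻¹) * P = 0 := by
    simpa [hP, hC, Matrix.mul_assoc] using mul_one_sub_mul_inv_mul_eq_zero (ω * g⁻¹) ωᵀ hCdet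
  intro pm
  have hPpm : (ω * g⁻¹) *ᵥ (P *ᵥ pm) = 0 := by rw [mulVec_mulVec, hconstr, zero_mulVec]
  refine ⟨hPpm, fun p hp => ?_⟩
  have hjump : P *ᵥ pm - pm = ωᵀ *ᵥ -((C⁻¹ * ω * g⁻¹) *ᵥ pm) := by
    simp [hP, sub_mulVec, mulVec_neg, mulVec_mulVec, Matrix.mul_assoc]
  have hsplit := dotProduct_mulVec_add_transpose_mulVec
    (isHermitian_iff_isSymm.mp hginv.isHermitian)
    (d := p - P *ᵥ pm) (by rw [mulVec_sub, hp, hPpm, sub_zero]) (-((C⁻¹ * ω * g⁻¹) *ᵥ pm))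
  rw [← hjump, sub_add_sub_cancel] at hsplit
  have hnonneg : 0 ≤ (p - P *ᵥ pm) ⬝ᵥ (g⁻¹ *ᵥ (p - P *ᵥ pm)) := by
    simpa using hginv.posSemidef.dotProduct_mulVec_nonneg (p - P *ᵥ pm)
  refine ⟨by linarith, fun heq => sub_eq_zero.mp ?_⟩
  exact hginv.eq_zero_of_dotProduct_mulVec_self_eq_zero (by linarith)

/-- The jump rule is the perfectly inelastic collision rule: the post-impact momentum
`p₊ = P pm` is the unique minimizer of the kinetic energy of the momentum difference,
`(p − pm)ᵀ g⁻¹ (p − pm)`, over all covectors `p` satisfying the constraints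
`ω g⁻¹ p = 0`. -/
theorem jump_rule_is_inelastic_collision
    {n s : ℕ} (hn : 0 < n) (hs : 0 < s)
    (g : Matrix (Fin n) (Fin n) ℝ) (hg : g.PosDef)
    (ω : Matrix (Fin s) (Fin n) ℝ) (hω : LinearIndependent ℝ (fun i => ω i))
    (C : Matrix (Fin s) (Fin s) ℝ) (hC : C = ω * g⁻¹ * ωᵀ)
    (P : Matrix (Fin n) (Fin n) ℝ) (hP : P = 1 - ωᵀ * C⁻¹ * ω * g⁻¹) :
    ∀ pm : Fin n → ℝ,
      (ω * g⁻¹) *ᵥ (P *ᵥ pm) = 0 ∧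
      ∀ p : Fin n → ℝ, (ω * g⁻¹) *ᵥ p = 0 →
        ((P *ᵥ pm - pm) ⬝ᵥ (g⁻¹ *ᵥ (P *ᵥ pm - pm)) ≤ (p - pm) ⬝ᵥ (g⁻¹ *ᵥ (p - pm)) ∧
          ((p - pm) ⬝ᵥ (g⁻¹ *ᵥ (p - pm)) = (P *ᵥ pm - pm) ⬝ᵥ (g⁻¹ *ᵥ (P *ᵥ pm - pm)) →
            p = P *ᵥ pm)) :=
  jump_rule_is_inelastic_collision_general g hg ω hω C hC P hP
end

section
/- If both a generalized differentiable codistribution and its annihilator are differentiable, then the codistribution is regular: if the family q ↦ D_q ⊆ ℝⁿ is locally spanned by finitely many continuous sections, and the annihilator family q ↦ D_q° = {v ∈ ℝⁿ : ⟨α, v⟩ = 0 for all α ∈ D_q} is also locally spanned by finitely many continuous sections, then the rank function ρ(q) = dim D_q is locally constant on X. -/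
/-!
The rank of a family of subspaces spanned by finitely many continuous sections is lower
semicontinuous, because linear independence of finitely many vectors is an open condition.
Since `dim D_q + dim D_q° = n`, lower semicontinuity of the rank of `D°` is upper
semicontinuity of the rank of `D`, so the rank of `D` is locally constant.
-/

open Matrix Module Submodule Set Filter Topology

theorem eventually_finrank_span_range_le {𝕜 E X ι : Type*} [NontriviallyNormedField 𝕜]
    [CompleteSpace 𝕜] [NormedAddCommGroup E] [NormedSpace 𝕜 E] [TopologicalSpace X] [Finite ι]
    {ω : ι → X → E} {q : X} (hω : ∀ i, ContinuousAt (ω i) q) :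
    ∀ᶠ q' in 𝓝 q, finrank 𝕜 (span 𝕜 (range fun i => ω i q)) ≤
      finrank 𝕜 (span 𝕜 (range fun i => ω i q')) := by
  obtain ⟨κ, a, ha, hspan, hli⟩ := exists_linearIndependent' 𝕜 fun i => ω i q
  have : Finite κ := .of_injective a ha
  cases nonempty_fintype κ
  have hsub : Tendsto (fun q' k => ω (a k) q') (𝓝 q) (𝓝 fun k => ω (a k) q) :=
    tendsto_pi_nhds.2 fun k => hω (a k)
  filter_upwards [hsub.eventually hli.eventually] with q' hli'
  calc finrank 𝕜 (span 𝕜 (range fun i => ω i q))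
      = Fintype.card κ := by rw [← hspan, finrank_span_eq_card hli]
    _ = finrank 𝕜 (span 𝕜 (range fun k => ω (a k) q')) := (finrank_span_eq_card hli').symm
    _ ≤ finrank 𝕜 (span 𝕜 (range fun i => ω i q')) :=
      have := FiniteDimensional.span_of_finite 𝕜 (finite_range fun i => ω i q')
      Submodule.finrank_mono (span_mono (range_comp_subset_range a fun i => ω i q'))

theorem finrank_add_finrank_eq_card_of_coe_eq_dotProduct_annihilator {K ι : Type*} [Field K]
    [Fintype ι] {S T : Submodule K (ι → K)}
    (hT : (T : Set (ι → K)) = {w | ∀ α ∈ S, α ⬝ᵥ w = 0}) :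
    finrank K S + finrank K T = Fintype.card ι := by
  classical
  have hT' :
      T = (S.map (dotProductEquiv K ι : (ι → K) →ₗ[K] Dual K (ι → K))).dualCoannihilator := by
    ext w
    rw [← SetLike.mem_coe, hT, mem_dualCoannihilator]
    simp only [Submodule.mem_map, forall_exists_index, and_imp, forall_apply_eq_imp_iff₂,
      LinearEquiv.coe_coe, dotProductEquiv_apply_apply, mem_ofPred_eq]
  rw [hT', ← (dotProductEquiv K ι).finrank_map_eq S,
    Subspace.finrank_add_finrank_dualCoannihilator_eq, finrank_fintype_fun_eq_card]

/-- If both a generalized differentiable codistribution and its annihilator are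
differentiable (i.e. both are locally spanned by finitely many continuous sections),
then the codistribution is regular: its rank function `q ↦ dim (D q)` is locally
constant. The annihilator assigns to `q` the subspace
`{v ∈ ℝⁿ : ⟨α, v⟩ = 0 for all α ∈ D q}`. -/
theorem regular_of_codistribution_and_annihilator_differentiable
    {X : Type*} [TopologicalSpace X] {n : ℕ}
    (D : X → Submodule ℝ (Fin n → ℝ))
    (hD : ∀ q : X, ∃ (U : Set X) (_ : IsOpen U) (_ : q ∈ U) (l : ℕ)
      (ω : Fin l → X → (Fin n → ℝ)),
        (∀ i, ContinuousOn (ω i) U) ∧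
        (∀ q' ∈ U, D q' = Submodule.span ℝ (Set.range fun i => ω i q')))
    (hDann : ∀ q : X, ∃ (U : Set X) (_ : IsOpen U) (_ : q ∈ U) (l : ℕ)
      (v : Fin l → X → (Fin n → ℝ)),
        (∀ i, ContinuousOn (v i) U) ∧
        (∀ q' ∈ U, (Submodule.span ℝ (Set.range fun i => v i q') : Set (Fin n → ℝ))
          = {w : Fin n → ℝ | ∀ α ∈ D q', α ⬝ᵥ w = 0})) :
    IsLocallyConstant (fun q => Module.finrank ℝ (D q)) := by
  refine (IsLocallyConstant.iff_eventually_eq _).2 fun q => ?_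
  obtain ⟨U, hU, hqU, _, ω, hω, hDω⟩ := hD q
  obtain ⟨V, hV, hqV, _, v, hv, hVv⟩ := hDann q
  have hD_le := eventually_finrank_span_range_le (𝕜 := ℝ) fun i =>
    (hω i).continuousAt (hU.mem_nhds hqU)
  have hAnn_le := eventually_finrank_span_range_le (𝕜 := ℝ) fun i =>
    (hv i).continuousAt (hV.mem_nhds hqV)
  have hcomplementary : ∀ q' ∈ V,
      finrank ℝ (D q') + finrank ℝ (span ℝ (range fun i => v i q')) = n := fun q' hq' => by
    simpa using finrank_add_finrank_eq_card_of_coe_eq_dotProduct_annihilator (hVv q' hq')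
  filter_upwards [hD_le, hAnn_le, hU.mem_nhds hqU, hV.mem_nhds hqV] with q' hD_q' hAnn_q' hq'U hq'V
  rw [← hDω q hqU, ← hDω q' hq'U] at hD_q'
  have := hcomplementary q hqV
  have := hcomplementary q' hq'V
  omega
end

section
/- The annihilator of a regular differentiable codistribution is differentiable: if near a point q₀ the family D_q ⊆ ℝⁿ is spanned by finitely many continuous sections and has constant rank ρ, then there exist an open neighbourhood V of q₀ and continuous maps v₁,…,v_{n−ρ} : V → ℝⁿ such that D_q° = span{v₁(q),…,v_{n−ρ}(q)} for all q ∈ V (and these spanning vectors are pointwise linearly independent). -/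
/-!
Pick `ρ` of the generating sections that are independent at `q₀`, and `ρ` coordinates on which
they form an invertible minor `B`. Where that minor stays invertible (an open set, by continuity
of the determinant) the chosen sections stay independent, so by the rank condition they span
`D q`, and `D q°` is the kernel of the matrix `(B q | C q)` whose rows they are. That kernel is
spanned by the independent columns of `(-(B q)⁻¹ C q; 1)`, which depend continuously on `q`
because matrix inversion is continuous on invertible matrices.
-/

open Matrix Set

theorem exists_linearIndependent_comp_of_finrank_span_eq {K V ι κ : Type*} [Field K]
    [AddCommGroup V] [Module K V] [Finite ι] [Fintype κ] (f : ι → V)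
    (h : Module.finrank K (Submodule.span K (range f)) = Fintype.card κ) :
    ∃ σ : κ → ι, LinearIndependent K (f ∘ σ) := by
  obtain ⟨s, a, ha, hspan, hli⟩ := exists_linearIndependent' K f
  have : Finite s := Finite.of_injective a ha
  have := Fintype.ofFinite s
  have hcard : Fintype.card κ = Fintype.card s := by
    rw [← h, ← hspan, finrank_span_eq_card hli]
  let g := Fintype.equivOfCardEq hcard
  exact ⟨a ∘ g, hli.comp g g.injective⟩

theorem LinearIndependent.span_eq_of_finrank_eq {K V κ : Type*} [Field K] [AddCommGroup V]
    [Module K V] [FiniteDimensional K V] [Fintype κ] {f : κ → V} (hf : LinearIndependent K f)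
    {S : Submodule K V} (hfS : range f ⊆ S) (hS : Module.finrank K S = Fintype.card κ) :
    Submodule.span K (range f) = S :=
  Submodule.eq_of_le_of_finrank_le (Submodule.span_le.2 hfS)
    (by rw [hS, finrank_span_eq_card hf])

theorem Function.Injective.exists_sumEquiv_comp_inl {α β γ : Type*} [Fintype α] [Fintype β]
    [Fintype γ] {f : α → γ} (hf : f.Injective)
    (h : Fintype.card α + Fintype.card β = Fintype.card γ) :
    ∃ e : α ⊕ β ≃ γ, e ∘ Sum.inl = f := by
  classical
  have hcard : Fintype.card β = Fintype.card {c // c ∉ range f} := by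
    rw [Fintype.card_subtype_compl, ← h, Set.card_range_of_injective hf]; omega
  refine ⟨((Equiv.ofInjective f hf).sumCongr (Fintype.equivOfCardEq hcard)).trans
    (Equiv.sumCompl (· ∈ range f)), ?_⟩
  ext a
  simp

namespace Matrix

variable {K : Type*} [Field K] {m n p : Type*}

theorem coe_ker_mulVecLin [Fintype n] (A : Matrix m n K) :
    (LinearMap.ker A.mulVecLin : Set (n → K)) =
      {w | ∀ α ∈ Submodule.span K (range A.row), α ⬝ᵥ w = 0} := by
  ext w
  change A *ᵥ w = 0 ↔
    Submodule.span K (range A.row) ≤ LinearMap.ker ((dotProductBilin K K).flip w)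
  rw [Submodule.span_le, range_subset_iff, funext_iff]
  rfl

theorem linearIndependent_rows_of_isUnit_submatrix [Fintype m] [DecidableEq m]
    {A : Matrix m n K} {τ : m → n} (h : IsUnit (A.submatrix id τ)) :
    LinearIndependent K A.row :=
  (linearIndependent_rows_of_isUnit h).of_comp (LinearMap.funLeft K K τ)

theorem exists_sumEquiv_isUnit_submatrix [Fintype m] [Fintype n] [Fintype p] [DecidableEq m]
    {A : Matrix m n K} (hA : LinearIndependent K A.row)
    (h : Fintype.card m + Fintype.card p = Fintype.card n) :
    ∃ e : m ⊕ p ≃ n, IsUnit (A.submatrix id (e ∘ Sum.inl)) := by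
  obtain ⟨τ, hτ⟩ := exists_linearIndependent_comp_of_finrank_span_eq (κ := m) A.col
    (by rw [← rank_eq_finrank_span_cols, hA.rank_matrix])
  obtain ⟨e, he⟩ := hτ.injective.of_comp.exists_sumEquiv_comp_inl h
  exact ⟨e, he ▸ linearIndependent_cols_iff_isUnit.1 hτ⟩

theorem linearIndependent_col_fromRows_one [Fintype p] [DecidableEq p] (X : Matrix m p K) :
    LinearIndependent K (fromRows X (1 : Matrix p p K)).col := by
  rw [← mulVec_injective_iff]
  intro y z h
  simpa using congrArg (fun w => w ∘ Sum.inr) h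

section Nullspace

variable [Fintype m] [DecidableEq m] [DecidableEq p]

theorem fromCols_mul_fromRows_neg_inv_mul [Fintype p] {B : Matrix m m K} (hB : IsUnit B)
    (C : Matrix m p K) : fromCols B C * fromRows (-(B⁻¹ * C)) (1 : Matrix p p K) = 0 := by
  rw [fromCols_mul_fromRows, Matrix.mul_neg, ← Matrix.mul_assoc,
    mul_nonsing_inv B ((isUnit_iff_isUnit_det B).1 hB)]
  simp

theorem ker_mulVecLin_fromCols [Fintype p] {B : Matrix m m K} (hB : IsUnit B)
    (C : Matrix m p K) :
    LinearMap.ker (fromCols B C).mulVecLin =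
      LinearMap.range (fromRows (-(B⁻¹ * C)) (1 : Matrix p p K)).mulVecLin := by
  refine le_antisymm (fun w hw => ⟨w ∘ Sum.inr, ?_⟩) ?_
  · rw [LinearMap.range_le_ker_iff, ← mulVecLin_mul, fromCols_mul_fromRows_neg_inv_mul hB,
      mulVecLin_zero]
  · have hBw : B *ᵥ (w ∘ Sum.inl) = -(C *ᵥ (w ∘ Sum.inr)) := by
      simpa [eq_neg_iff_add_eq_zero] using hw
    have hinl : -(B⁻¹ * C) *ᵥ (w ∘ Sum.inr) = w ∘ Sum.inl := by
      rw [neg_mulVec, ← mulVec_mulVec, ← mulVec_neg, ← hBw, mulVec_mulVec,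
        nonsing_inv_mul B ((isUnit_iff_isUnit_det B).1 hB), one_mulVec]
    ext (i | i)
    · simp [hinl]
    · simp

/-- Writing `A = (B | C)` with the columns in the order `e`, the columns of `(-B⁻¹ C; 1)`,
read back in the original order, are the solutions of `A x = 0` obtained by solving for the
variables `e ∘ Sum.inl` in terms of the free variables `e ∘ Sum.inr`. -/
noncomputable def nullspaceMatrix (A : Matrix m n K) (e : m ⊕ p ≃ n) : Matrix n p K :=
  (fromRows (-((A.submatrix id (e ∘ Sum.inl))⁻¹ * A.submatrix id (e ∘ Sum.inr)))
    (1 : Matrix p p K)).submatrix e.symm id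

theorem ker_mulVecLin_eq_range_nullspaceMatrix [Fintype n] [Fintype p] {A : Matrix m n K}
    {e : m ⊕ p ≃ n} (hB : IsUnit (A.submatrix id (e ∘ Sum.inl))) :
    LinearMap.ker A.mulVecLin = LinearMap.range (A.nullspaceMatrix e).mulVecLin := by
  have hblock : A.submatrix id e =
      fromCols (A.submatrix id (e ∘ Sum.inl)) (A.submatrix id (e ∘ Sum.inr)) := by
    ext i (j | j) <;> rfl
  ext w
  have hker :=
    SetLike.ext_iff.1 (ker_mulVecLin_fromCols hB (A.submatrix id (e ∘ Sum.inr))) (w ∘ e)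
  rw [← hblock] at hker
  simp only [LinearMap.mem_ker, LinearMap.mem_range, mulVecLin_apply, submatrix_mulVec_equiv,
    Function.comp_assoc, e.self_comp_symm, Function.comp_id] at hker ⊢
  rw [hker, nullspaceMatrix]
  exact exists_congr fun y => (Equiv.comp_symm_eq e _ _).symm

theorem linearIndependent_col_nullspaceMatrix [Fintype p] (A : Matrix m n K) (e : m ⊕ p ≃ n) :
    LinearIndependent K (A.nullspaceMatrix e).col := by
  unfold nullspaceMatrix
  generalize -((A.submatrix id (e ∘ Sum.inl))⁻¹ * A.submatrix id (e ∘ Sum.inr)) = X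
  exact (linearIndependent_col_fromRows_one X).map'
    (LinearEquiv.funCongrLeft K K e.symm).toLinearMap (LinearEquiv.ker _)

theorem _root_.Continuous.matrix_nullspaceMatrix [TopologicalSpace K]
    [IsTopologicalDivisionRing K] {X : Type*} [TopologicalSpace X] {A : X → Matrix m n K}
    (hA : Continuous A) (e : m ⊕ p ≃ n)
    (hB : ∀ x, IsUnit ((A x).submatrix id (e ∘ Sum.inl))) :
    Continuous fun x => (A x).nullspaceMatrix e := by
  have hinv : Continuous fun x => ((A x).submatrix id (e ∘ Sum.inl))⁻¹ := by
    refine continuous_iff_continuousAt.2 fun x => ?_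
    refine (continuousAt_matrix_inv _ ?_).comp (hA.matrix_submatrix _ _).continuousAt
    rw [Ring.inverse_eq_inv']
    exact continuousAt_inv₀ ((isUnit_iff_isUnit_det _).1 (hB x)).ne_zero
  have hX := (hinv.matrix_mul (hA.matrix_submatrix id (e ∘ Sum.inr))).neg
  refine continuous_matrix fun i j => ?_
  unfold nullspaceMatrix
  cases h : e.symm i with
  | inl k => simpa [h] using hX.matrix_elem k j
  | inr k =>
    simp only [submatrix_apply, h, id_eq, fromRows_apply_inr]
    exact continuous_const

end Nullspace

end Matrix

/-- The annihilator of a regular differentiable codistribution is differentiable: if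
near a point `q₀` the family `D q ⊆ ℝⁿ` is spanned by finitely many continuous sections
and has constant rank `ρ`, then on some open neighbourhood `V` of `q₀` there are
`n − ρ` continuous, pointwise linearly independent sections spanning the annihilator
`D q ° = {v : ⟨α, v⟩ = 0 for all α ∈ D q}`. -/
theorem annihilator_of_regular_codistribution_differentiable
    {X : Type*} [TopologicalSpace X] {n : ℕ}
    (D : X → Submodule ℝ (Fin n → ℝ)) (q₀ : X) (ρ : ℕ)
    (hreg : ∃ (U : Set X) (_ : IsOpen U) (_ : q₀ ∈ U) (l : ℕ)
      (ω : Fin l → X → (Fin n → ℝ)),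
        (∀ i, ContinuousOn (ω i) U) ∧
        (∀ q ∈ U, D q = Submodule.span ℝ (Set.range fun i => ω i q)) ∧
        (∀ q ∈ U, Module.finrank ℝ (D q) = ρ)) :
    ∃ (V : Set X) (_ : IsOpen V) (_ : q₀ ∈ V) (v : Fin (n - ρ) → X → (Fin n → ℝ)),
      (∀ j, ContinuousOn (v j) V) ∧
      (∀ q ∈ V, (Submodule.span ℝ (Set.range fun j => v j q) : Set (Fin n → ℝ))
        = {w : Fin n → ℝ | ∀ α ∈ D q, α ⬝ᵥ w = 0}) ∧
      (∀ q ∈ V, LinearIndependent ℝ (fun j => v j q)) := by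
  obtain ⟨U, hU, hq₀U, l, ω, hω, hspan, hrank⟩ := hreg
  obtain ⟨σ, hσ⟩ := exists_linearIndependent_comp_of_finrank_span_eq (K := ℝ) (κ := Fin ρ)
    (fun i => ω i q₀) (by rw [← hspan q₀ hq₀U, hrank q₀ hq₀U, Fintype.card_fin])
  let A : X → Matrix (Fin ρ) (Fin n) ℝ := fun q => of fun k => ω (σ k) q
  have hρn : ρ ≤ n :=
    hrank q₀ hq₀U ▸ (Submodule.finrank_le _).trans_eq (Module.finrank_fin_fun ℝ)
  obtain ⟨e, he⟩ := (A q₀).exists_sumEquiv_isUnit_submatrix (p := Fin (n - ρ)) hσ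
    (by simp only [Fintype.card_fin]; omega)
  have hA : ContinuousOn A U := continuousOn_pi.2 fun k => hω (σ k)
  let minorDet : X → ℝ := fun q => ((A q).submatrix id (e ∘ Sum.inl)).det
  let V := U ∩ minorDet ⁻¹' {0}ᶜ
  have hunit (q : X) (hq : q ∈ V) : IsUnit ((A q).submatrix id (e ∘ Sum.inl)) :=
    (isUnit_iff_isUnit_det _).2 (Ne.isUnit hq.2)
  refine ⟨V, ?_, ⟨hq₀U, ((isUnit_iff_isUnit_det _).1 he).ne_zero⟩,
    fun j q => ((A q).nullspaceMatrix e).col j, fun j => ?_, fun q hq => ?_,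
    fun q _ => linearIndependent_col_nullspaceMatrix _ _⟩
  · exact (continuousOn_iff_continuous_domRestrict.2
      ((continuousOn_iff_continuous_domRestrict.1 hA).matrix_submatrix id _).matrix_det
      ).isOpen_inter_preimage hU isOpen_compl_singleton
  · have hN := Continuous.matrix_nullspaceMatrix
      (continuousOn_iff_continuous_domRestrict.1 (hA.mono inter_subset_left)) e
      fun q => hunit q q.2
    exact continuousOn_iff_continuous_domRestrict.2 (continuous_pi fun i => hN.matrix_elem i j)
  · have hD : Submodule.span ℝ (range (A q).row) = D q :=
      (linearIndependent_rows_of_isUnit_submatrix (hunit q hq)).span_eq_of_finrank_eq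
        (range_subset_iff.2 fun k => hspan q hq.1 ▸ Submodule.subset_span ⟨σ k, rfl⟩)
        (by rw [hrank q hq.1, Fintype.card_fin])
    rw [← hD, ← coe_ker_mulVecLin, ker_mulVecLin_eq_range_nullspaceMatrix (hunit q hq),
      range_mulVecLin]
end

section
/- For the homogeneous sphere of radius r > 0 and radius of gyration k > 0 rolling onto a rough half-plane, with constraint matrix ω = [[1,0,0,−r,0],[0,1,r,0,0]] and metric g = diag(1,1,k²,k²,k²): (i) C = ω g⁻¹ ωᵀ = (1 + r²/k²)·I₂; and (ii) the jump rule applied to the pre-impact momentum p₋ = g·(ẋ₀, ẏ₀, (ω_x)₀, (ω_y)₀, (ω_z)₀) yields post-impact velocities ẋ₊ = (r²ẋ₀ + r k²(ω_y)₀)/(r² + k²), ẏ₊ = (r²ẏ₀ − r k²(ω_x)₀)/(r² + k²), (ω_x)₊ = (−r ẏ₀ + k²(ω_x)₀)/(r² + k²), (ω_y)₊ = (r ẋ₀ + k²(ω_y)₀)/(r² + k²), and (ω_z)₊ = (ω_z)₀, i.e. g⁻¹ P p₋ equals this velocity vector. -/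
open Matrix

/-- The rolling sphere: for a homogeneous sphere of radius `r > 0` and radius of
gyration `k > 0` rolling onto a rough half-plane, with constraint matrix
`ω = [[1,0,0,−r,0],[0,1,r,0,0]]` and metric `g = diag(1,1,k²,k²,k²)`:
(i) `C = ω g⁻¹ ωᵀ = (1 + r²/k²) • I₂`; and (ii) the jump rule applied to the
pre-impact momentum `pm = g • (ẋ₀, ẏ₀, ωx₀, ωy₀, ωz₀)` yields the post-impact
velocities `g⁻¹ (P pm) = ((r²ẋ₀ + rk²ωy₀)/(r²+k²), (r²ẏ₀ − rk²ωx₀)/(r²+k²),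
(−rẏ₀ + k²ωx₀)/(r²+k²), (rẋ₀ + k²ωy₀)/(r²+k²), ωz₀)`. -/
theorem rolling_sphere_jump_rule
    (r k : ℝ) (hr : 0 < r) (hk : 0 < k)
    (x0 y0 wx0 wy0 wz0 : ℝ)
    (g : Matrix (Fin 5) (Fin 5) ℝ)
    (hg : g = Matrix.diagonal ![1, 1, k ^ 2, k ^ 2, k ^ 2])
    (ω : Matrix (Fin 2) (Fin 5) ℝ)
    (hω : ω = !![1, 0, 0, -r, 0; 0, 1, r, 0, 0])
    (C : Matrix (Fin 2) (Fin 2) ℝ) (hC : C = ω * g⁻¹ * ωᵀ)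
    (P : Matrix (Fin 5) (Fin 5) ℝ) (hP : P = 1 - ωᵀ * C⁻¹ * ω * g⁻¹)
    (pm : Fin 5 → ℝ) (hpm : pm = g *ᵥ ![x0, y0, wx0, wy0, wz0]) :
    C = (1 + r ^ 2 / k ^ 2) • (1 : Matrix (Fin 2) (Fin 2) ℝ) ∧
    g⁻¹ *ᵥ (P *ᵥ pm) =
      ![(r ^ 2 * x0 + r * k ^ 2 * wy0) / (r ^ 2 + k ^ 2),
        (r ^ 2 * y0 - r * k ^ 2 * wx0) / (r ^ 2 + k ^ 2),
        (-r * y0 + k ^ 2 * wx0) / (r ^ 2 + k ^ 2),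
        (r * x0 + k ^ 2 * wy0) / (r ^ 2 + k ^ 2),
        wz0] := by
  have hk2 : (k : ℝ) ^ 2 ≠ 0 := pow_ne_zero _ hk.ne'
  have hrk : r ^ 2 + k ^ 2 ≠ 0 := by positivity
  have hginv : g⁻¹ = !![1,0,0,0,0; 0,1,0,0,0; 0,0,(k^2)⁻¹,0,0; 0,0,0,(k^2)⁻¹,0; 0,0,0,0,(k^2)⁻¹] := by
    apply Matrix.inv_eq_right_inv
    ext i j
    rw [hg]
    fin_cases i <;> fin_cases j <;>
      simp [Matrix.mul_apply, Fin.sum_univ_five, Matrix.one_apply, Matrix.diagonal, hk2, Matrix.vecHead, Matrix.vecTail, Matrix.transpose_apply]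
  have hC' : C = (1 + r ^ 2 / k ^ 2) • (1 : Matrix (Fin 2) (Fin 2) ℝ) := by
    rw [hC, hω, hginv]
    ext i j
    fin_cases i <;> fin_cases j <;>
      simp [Matrix.mul_apply, Fin.sum_univ_five, Fin.sum_univ_two, Matrix.one_apply, Matrix.vecHead, Matrix.vecTail, Matrix.transpose_apply] <;> ring
  have hCinv : C⁻¹ = (k ^ 2 / (r ^ 2 + k ^ 2)) • (1 : Matrix (Fin 2) (Fin 2) ℝ) := by
    apply Matrix.inv_eq_right_inv
    rw [hC', smul_mul_assoc, Matrix.mul_smul, Matrix.one_mul, smul_smul]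
    rw [show (1 + r ^ 2 / k ^ 2) * (k ^ 2 / (r ^ 2 + k ^ 2)) = 1 by field_simp; ring]
    simp
  refine ⟨hC', ?_⟩
  have hu : g⁻¹ *ᵥ pm = ![x0, y0, wx0, wy0, wz0] := by
    rw [hpm, hginv, hg]
    ext i
    fin_cases i <;>
      simp [Matrix.mulVec, dotProduct, Fin.sum_univ_five, Matrix.diagonal, hk2, Matrix.vecHead, Matrix.vecTail, Matrix.transpose_apply]
  have hv : ω *ᵥ (g⁻¹ *ᵥ pm) = ![x0 - r * wy0, y0 + r * wx0] := by
    rw [hu, hω]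
    ext i
    fin_cases i <;>
      simp [Matrix.mulVec, dotProduct, Fin.sum_univ_five, Matrix.vecHead, Matrix.vecTail, Matrix.transpose_apply] <;> ring
  have hw : C⁻¹ *ᵥ (ω *ᵥ (g⁻¹ *ᵥ pm)) =
      ![k ^ 2 / (r ^ 2 + k ^ 2) * (x0 - r * wy0),
        k ^ 2 / (r ^ 2 + k ^ 2) * (y0 + r * wx0)] := by
    rw [hv, hCinv]
    ext i
    fin_cases i <;> simp [Matrix.mulVec, dotProduct, Fin.sum_univ_two, Matrix.one_apply, Matrix.vecHead, Matrix.vecTail, Matrix.transpose_apply]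
  have hz : ωᵀ *ᵥ (C⁻¹ *ᵥ (ω *ᵥ (g⁻¹ *ᵥ pm))) =
      ![k ^ 2 / (r ^ 2 + k ^ 2) * (x0 - r * wy0),
        k ^ 2 / (r ^ 2 + k ^ 2) * (y0 + r * wx0),
        r * (k ^ 2 / (r ^ 2 + k ^ 2) * (y0 + r * wx0)),
        -r * (k ^ 2 / (r ^ 2 + k ^ 2) * (x0 - r * wy0)),
        0] := by
    rw [hw, hω]
    ext i
    fin_cases i <;>
      simp [Matrix.mulVec, dotProduct, Fin.sum_univ_two, Matrix.transpose, Matrix.vecHead, Matrix.vecTail, Matrix.transpose_apply] <;> ring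
  have hPpm : P *ᵥ pm = pm - ωᵀ *ᵥ (C⁻¹ *ᵥ (ω *ᵥ (g⁻¹ *ᵥ pm))) := by
    rw [hP, Matrix.sub_mulVec, Matrix.one_mulVec, Matrix.mulVec_mulVec, Matrix.mulVec_mulVec,
      Matrix.mulVec_mulVec]
  rw [hPpm, Matrix.mulVec_sub, hz, hu, hginv]
  ext i
  fin_cases i <;>
    simp [Matrix.mulVec, dotProduct, Fin.sum_univ_five, Matrix.diagonal, Matrix.vecHead, Matrix.vecTail, Matrix.transpose_apply] <;>
    field_simp <;> ring
end
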